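/- Let |Φ₁^in⟩ = ½(|0⟩_a|0⟩_A + |1⟩_a|1⟩_A) ⊗ (|0⟩_B|0⟩_b + |2⟩_B|2⟩_b) ∈ ℂ² ⊗ ℂ² ⊗ ℂ³ ⊗ ℂ³ and |Φ₁^out⟩ = (I_a ⊗ U_{2×3} ⊗ I_b)|Φ₁^in⟩. Then the reduced density matrix of |Φ₁^out⟩⟨Φ₁^out| on the aA factors (partial trace over B and b) equals (1/4)·I₄, the maximally mixed state on ℂ² ⊗ ℂ²; equivalently E(Φ₁^out) = 2 while E(Φ₁^in) = 0. -/
import Mathlib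


open scoped BigOperators Matrix

/-- Von Neumann entropy in bits: `S(ρ) = -∑ᵢ λᵢ log₂ λᵢ` over the eigenvalues of `ρ`
(interpreted as `0` if `ρ` is not Hermitian). -/
noncomputable def vnEntropy {n : Type*} [Fintype n] [DecidableEq n]
    (ρ : Matrix n n ℂ) : ℝ :=
  if h : ρ.IsHermitian then -∑ i, h.eigenvalues i * Real.logb 2 (h.eigenvalues i) else 0

/-- Reduced density matrix of a pure state `ψ` on a bipartite system, obtained by
tracing out the second factor. -/
noncomputable def redDM {m p : Type*} [Fintype m] [Fintype p]
    (ψ : m × p → ℂ) : Matrix m m ℂ :=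
  Matrix.of fun x y => ∑ z, ψ (x, z) * star (ψ (y, z))

/-- Entanglement across the `aA : Bb` cut of a pure state of `a, A, B, b`:
the entropy of the reduced state on `aA`. -/
noncomputable def entE {a A B b : ℕ}
    (ψ : (Fin a × Fin A) × (Fin B × Fin b) → ℂ) : ℝ :=
  vnEntropy (redDM ψ)

/-- The action of `I_a ⊗ U ⊗ I_b` on a state of `a, A, B, b`. -/
noncomputable def applyU {a A B b : ℕ}
    (U : Matrix (Fin A × Fin B) (Fin A × Fin B) ℂ)
    (ψ : (Fin a × Fin A) × (Fin B × Fin b) → ℂ) :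
    (Fin a × Fin A) × (Fin B × Fin b) → ℂ :=
  fun x => ∑ p : Fin A × Fin B, U (x.1.2, x.2.1) p * ψ ((x.1.1, p.1), (p.2, x.2.2))

/-- `ψ` is a unit vector. -/
def IsUnitVec {d : Type*} [Fintype d] (ψ : d → ℂ) : Prop :=
  ∑ x, ‖ψ x‖ ^ 2 = 1

/-- Entangling power `E^↑(U)`: the supremum over ancilla dimensions `a, b ≥ 1` and unit
input states of the entanglement increase produced by `I_a ⊗ U ⊗ I_b`. -/
noncomputable def entPower {A B : ℕ}
    (U : Matrix (Fin A × Fin B) (Fin A × Fin B) ℂ) : ℝ :=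
  sSup {r : ℝ | ∃ (a b : ℕ), 0 < a ∧ 0 < b ∧
    ∃ ψ : (Fin a × Fin A) × (Fin B × Fin b) → ℂ, IsUnitVec ψ ∧
      r = entE (applyU U ψ) - entE ψ}

/-- Disentangling power `E^↓(U) = E^↑(U†)`. -/
noncomputable def disPower {A B : ℕ}
    (U : Matrix (Fin A × Fin B) (Fin A × Fin B) ℂ) : ℝ :=
  entPower Uᴴ

/-- The primitive cube root of unity `ω = e^{2πi/3}`. -/
noncomputable def ω : ℂ := Complex.exp (2 * Real.pi * Complex.I / 3)

/-- The "trine" states `|α⟩, |β⟩, |γ⟩` in `ℂ²`. -/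
noncomputable def trine : Fin 3 → Fin 2 → ℂ :=
  ![![1, 0],
    ![-(1/2 : ℂ), (Real.sqrt 3 : ℂ) / 2],
    ![-(1/2 : ℂ), -((Real.sqrt 3 : ℂ) / 2)]]

/-- The orthogonal trine states `|α⊥⟩, |β⊥⟩, |γ⊥⟩` in `ℂ²`. -/
noncomputable def trinePerp : Fin 3 → Fin 2 → ℂ :=
  ![![0, 1],
    ![-((Real.sqrt 3 : ℂ) / 2), -(1/2 : ℂ)],
    ![(Real.sqrt 3 : ℂ) / 2, -(1/2 : ℂ)]]

/-- The vectors `|w_{ij}⟩` in `ℂ² ⊗ ℂ³`: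
`|w_{0j}⟩ = (1/√3)(|α⟩|0⟩ + ω^j |β⟩|1⟩ + ω^{2j} |γ⟩|2⟩)` and
`|w_{1j}⟩ = (1/√3)(|α⊥⟩|0⟩ + ω^j |β⊥⟩|1⟩ + ω^{2j} |γ⊥⟩|2⟩)`. -/
noncomputable def w (i : Fin 2) (j : Fin 3) : Fin 2 × Fin 3 → ℂ :=
  fun p => ((Real.sqrt 3 : ℂ))⁻¹ * ω ^ ((j : ℕ) * (p.2 : ℕ)) *
    (if i = 0 then trine p.2 p.1 else trinePerp p.2 p.1)

/-- The coefficients of `U_{2×3}`: `-i` on `|00⟩` and `|12⟩`, `1` elsewhere. -/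
noncomputable def U23coeff : Fin 2 → Fin 3 → ℂ :=
  ![![-Complex.I, 1, 1], ![1, 1, -Complex.I]]

/-- The gate `U_{2×3} = -i|w₀₀⟩⟨00| + |w₀₁⟩⟨01| + |w₀₂⟩⟨02|
 + |w₁₀⟩⟨10| + |w₁₁⟩⟨11| - i|w₁₂⟩⟨12|` on `ℂ² ⊗ ℂ³`. -/
noncomputable def U23 : Matrix (Fin 2 × Fin 3) (Fin 2 × Fin 3) ℂ :=
  Matrix.of fun p q => U23coeff q.1 q.2 * w q.1 q.2 p

/-- The input state `|Φ₁^in⟩ = ½(|0⟩_a|0⟩_A + |1⟩_a|1⟩_A) ⊗ (|0⟩_B|0⟩_b + |2⟩_B|2⟩_b)`. -/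
noncomputable def Phi1in : (Fin 2 × Fin 2) × (Fin 3 × Fin 3) → ℂ :=
  fun x => (1/2 : ℂ) * (if x.1.1 = x.1.2 then 1 else 0) *
    (if x.2 = ((0 : Fin 3), (0 : Fin 3)) ∨ x.2 = ((2 : Fin 3), (2 : Fin 3)) then 1 else 0)

section Aux

lemma omega_mul_star : ω * star ω = 1 := by
  rw [ω, Complex.star_def, ← Complex.exp_conj, ← Complex.exp_add]
  have : (starRingEnd ℂ) (2 * Real.pi * Complex.I / 3) = -(2 * Real.pi * Complex.I / 3) := by
    simp [map_div₀, map_mul, Complex.conj_I, Complex.conj_ofReal, map_ofNat]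
    ring
  rw [this]; simp

lemma sqrt3_mul_self : (Real.sqrt 3 : ℂ) * (Real.sqrt 3 : ℂ) = 3 := by
  rw [← Complex.ofReal_mul, Real.mul_self_sqrt (by norm_num)]
  norm_num

lemma star_sqrt3 : star (Real.sqrt 3 : ℂ) = (Real.sqrt 3 : ℂ) := by
  rw [Complex.star_def, Complex.conj_ofReal]

/-- The matrix `∑_k |t_i(k)⟩⟨t_{i'}(k)|` (normalized), entrywise. -/
noncomputable def mval (i i' A₁ A₂ : Fin 2) : ℂ :=
  if i = i' then (if A₁ = A₂ then 1 else 0)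
  else (if A₁ = A₂ then 0 else (if (i = 0) = (A₁ = 0) then 1 else -1))

lemma w_mul_star (i i' : Fin 2) (j : Fin 3) (A₁ A₂ : Fin 2) (B : Fin 3) :
    w i j (A₁, B) * star (w i' j (A₂, B)) =
      (3 : ℂ)⁻¹ * ((if i = 0 then trine B A₁ else trinePerp B A₁) *
        star (if i' = 0 then trine B A₂ else trinePerp B A₂)) := by
  unfold w
  simp only [star_mul, star_pow, star_inv₀, star_sqrt3]
  have key : ω ^ ((j:ℕ)*(B:ℕ)) * (star ω) ^ ((j:ℕ)*(B:ℕ)) = 1 := by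
    rw [← mul_pow, omega_mul_star, one_pow]
  trans (((Real.sqrt 3:ℂ))⁻¹ * ((Real.sqrt 3:ℂ))⁻¹ *
      (ω ^ ((j:ℕ)*(B:ℕ)) * (star ω) ^ ((j:ℕ)*(B:ℕ))) *
      ((if i = 0 then trine B A₁ else trinePerp B A₁) *
        star (if i' = 0 then trine B A₂ else trinePerp B A₂)))
  · ring
  · rw [key, mul_one, ← mul_inv, sqrt3_mul_self]

lemma sum_w (i i' : Fin 2) (j : Fin 3) (A₁ A₂ : Fin 2) :
    ∑ B : Fin 3, w i j (A₁, B) * star (w i' j (A₂, B)) =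
      (2 : ℂ)⁻¹ * mval i i' A₁ A₂ := by
  simp only [Fin.sum_univ_three, w_mul_star]
  fin_cases i <;> fin_cases i' <;> fin_cases A₁ <;> fin_cases A₂ <;>
    · simp only [trine, trinePerp, mval, Matrix.cons_val_zero, Matrix.cons_val_one,
        Matrix.head_cons, Matrix.cons_val_two, Matrix.tail_cons, star_sqrt3,
        if_true, if_false, Fin.isValue, show ((0:Fin 2) = 0) = True by simp,
        show ((1:Fin 2) = 0) = False by simp, star_zero, star_one, star_neg, star_div₀,
        star_ofNat, Matrix.head_fin_const]
      norm_num
      try (rw [div_mul_div_comm, sqrt3_mul_self]; norm_num)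

lemma applyU_eq : applyU U23 Phi1in = fun x =>
    if x.2.2 = 1 then 0 else
      (1 / 2 : ℂ) * U23coeff x.1.1 x.2.2 * w x.1.1 x.2.2 (x.1.2, x.2.1) := by
  funext x
  obtain ⟨⟨a1, A1⟩, B1, b1⟩ := x
  unfold applyU U23 Phi1in
  simp only [Fintype.sum_prod_type, Fin.sum_univ_two, Fin.sum_univ_three, Matrix.of_apply]
  fin_cases a1 <;> fin_cases b1 <;>
    simp [Prod.ext_iff] <;> ring

lemma innerSumU (a1 a2 A1 A2 : Fin 2) (jb : Fin 3) :
    ∑ B : Fin 3, ((1 / 2 : ℂ) * U23coeff a1 jb * w a1 jb (A1, B)) *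
        star ((1 / 2 : ℂ) * U23coeff a2 jb * w a2 jb (A2, B)) =
      (8 : ℂ)⁻¹ * (U23coeff a1 jb * star (U23coeff a2 jb)) * mval a1 a2 A1 A2 := by
  have hterm : ∀ B : Fin 3,
      ((1 / 2 : ℂ) * U23coeff a1 jb * w a1 jb (A1, B)) *
        star ((1 / 2 : ℂ) * U23coeff a2 jb * w a2 jb (A2, B)) =
      ((4 : ℂ)⁻¹ * (U23coeff a1 jb * star (U23coeff a2 jb))) *
        (w a1 jb (A1, B) * star (w a2 jb (A2, B))) := by
    intro B
    simp only [star_mul]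
    have : star ((1 / 2 : ℂ)) = (1 / 2 : ℂ) := by norm_num
    rw [this]; ring
  simp only [hterm]
  rw [← Finset.mul_sum, sum_w]
  ring

lemma redDM_out : redDM (applyU U23 Phi1in) =
    (1 / 4 : ℂ) • (1 : Matrix (Fin 2 × Fin 2) (Fin 2 × Fin 2) ℂ) := by
  rw [applyU_eq]
  ext x y
  obtain ⟨a1, A1⟩ := x
  obtain ⟨a2, A2⟩ := y
  simp only [redDM, Matrix.of_apply, Matrix.smul_apply, Matrix.one_apply]
  rw [Fintype.sum_prod_type_right, Fin.sum_univ_three]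
  simp only [show ((0:Fin 3) = 1) = False by simp, show ((1:Fin 3) = 1) = True by simp,
    show ((2:Fin 3) = 1) = False by simp, if_true, if_false, star_zero, mul_zero,
    Finset.sum_const_zero, add_zero]
  rw [innerSumU, innerSumU]
  fin_cases a1 <;> fin_cases a2 <;> fin_cases A1 <;> fin_cases A2 <;>
    simp [U23coeff, mval, Prod.ext_iff, Complex.ext_iff] <;> ring

lemma eigenvalues_of_smul_one {n : Type*} [Fintype n] [DecidableEq n] (c : ℝ)
    (h : (((c : ℂ)) • (1 : Matrix n n ℂ)).IsHermitian) (i : n) :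
    h.eigenvalues i = c := by
  have hv := h.mulVec_eigenvectorBasis i
  have hb : ⇑(h.eigenvectorBasis i) ≠ 0 := by
    have := h.eigenvectorBasis.orthonormal.ne_zero i
    intro hc
    apply this
    ext j
    exact congrFun hc j
  obtain ⟨j, hj⟩ := Function.ne_iff.mp hb
  have hj' : h.eigenvectorBasis i j ≠ 0 := by simpa using hj
  have h0 := congrFun hv j
  rw [Matrix.smul_mulVec, Matrix.one_mulVec] at h0
  have h1 : (c : ℂ) * h.eigenvectorBasis i j =
      (h.eigenvalues i : ℂ) * h.eigenvectorBasis i j := by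
    simpa [Complex.real_smul] using h0
  exact (Complex.ofReal_inj.mp (mul_right_cancel₀ hj' h1).symm)

lemma eigenvalues_of_idem {n : Type*} [Fintype n] [DecidableEq n] {P : Matrix n n ℂ}
    (h : P.IsHermitian) (hidem : P * P = P) (i : n) :
    h.eigenvalues i = 0 ∨ h.eigenvalues i = 1 := by
  have hv := h.mulVec_eigenvectorBasis i
  have hb : ⇑(h.eigenvectorBasis i) ≠ 0 := by
    have := h.eigenvectorBasis.orthonormal.ne_zero i
    intro hc
    apply this
    ext j
    exact congrFun hc j
  have h2 : P *ᵥ (P *ᵥ ⇑(h.eigenvectorBasis i)) =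
      h.eigenvalues i • h.eigenvalues i • ⇑(h.eigenvectorBasis i) := by
    rw [hv, Matrix.mulVec_smul, hv]
  rw [Matrix.mulVec_mulVec, hidem, hv] at h2
  have h2' : (h.eigenvalues i - h.eigenvalues i * h.eigenvalues i) •
      (⇑(h.eigenvectorBasis i) : n → ℂ) = 0 := by
    rw [sub_smul, mul_smul, ← h2, sub_self]
  rcases smul_eq_zero.mp h2' with hc | hc
  · have h7 : h.eigenvalues i * (1 - h.eigenvalues i) = 0 := by linear_combination hc
    rcases mul_eq_zero.mp h7 with h8 | h8
    · exact Or.inl h8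
    · exact Or.inr (by linarith)
  · exact absurd hc hb

lemma logb_quarter : Real.logb 2 (1 / 4) = -2 := by
  rw [show (1 / 4 : ℝ) = ((2 : ℝ) ^ (2 : ℕ))⁻¹ by norm_num, Real.logb_inv, Real.logb_pow]
  norm_num [Real.logb_self_eq_one]

lemma vnEntropy_quarter :
    vnEntropy ((1 / 4 : ℂ) • (1 : Matrix (Fin 2 × Fin 2) (Fin 2 × Fin 2) ℂ)) = 2 := by
  have hcast : ((1 / 4 : ℂ)) • (1 : Matrix (Fin 2 × Fin 2) (Fin 2 × Fin 2) ℂ) =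
      (((1 / 4 : ℝ) : ℂ)) • 1 := by norm_num
  have hH : (((1 / 4 : ℂ)) • (1 : Matrix (Fin 2 × Fin 2) (Fin 2 × Fin 2) ℂ)).IsHermitian := by
    rw [Matrix.IsHermitian, Matrix.conjTranspose_smul, Matrix.conjTranspose_one]
    norm_num
  rw [vnEntropy, dif_pos hH]
  have heig : ∀ i, hH.eigenvalues i = (1 / 4 : ℝ) := by
    intro i
    have hH' : ((((1 / 4 : ℝ) : ℂ)) • (1 : Matrix (Fin 2 × Fin 2) (Fin 2 × Fin 2) ℂ)).IsHermitian := by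
      rw [← hcast]; exact hH
    have : hH.eigenvalues i = hH'.eigenvalues i := by congr 1 <;> rw [hcast]
    rw [this, eigenvalues_of_smul_one]
  simp only [heig, logb_quarter]
  norm_num [Finset.sum_const, Finset.card_univ]

/-- The reduced density matrix of the input state. -/
noncomputable def Pin : Matrix (Fin 2 × Fin 2) (Fin 2 × Fin 2) ℂ :=
  Matrix.of fun x y => if x.1 = x.2 ∧ y.1 = y.2 then (1 / 2 : ℂ) else 0

lemma redDM_in : redDM Phi1in = Pin := by
  ext x y
  obtain ⟨a1, A1⟩ := x
  obtain ⟨a2, A2⟩ := y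
  rw [redDM, Pin]
  simp only [Matrix.of_apply]
  rw [Fintype.sum_prod_type]
  simp only [Fin.sum_univ_three]
  unfold Phi1in
  fin_cases a1 <;> fin_cases a2 <;> fin_cases A1 <;> fin_cases A2 <;>
    simp [Prod.ext_iff] <;> norm_num

lemma Pin_herm : Pin.IsHermitian := by
  rw [Matrix.IsHermitian]
  ext x y
  simp only [Matrix.conjTranspose_apply, Pin, Matrix.of_apply]
  rcases x with ⟨a1, A1⟩
  rcases y with ⟨a2, A2⟩
  by_cases h1 : a1 = A1 <;> by_cases h2 : a2 = A2 <;> simp [h1, h2]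

lemma Pin_idem : Pin * Pin = Pin := by
  ext x y
  rw [Matrix.mul_apply]
  rw [Fintype.sum_prod_type]
  simp only [Fin.sum_univ_two, Pin, Matrix.of_apply]
  rcases x with ⟨a1, A1⟩
  rcases y with ⟨a2, A2⟩
  by_cases h1 : a1 = A1 <;> by_cases h2 : a2 = A2 <;> simp [h1, h2] <;> norm_num

lemma vnEntropy_Pin : vnEntropy Pin = 0 := by
  rw [vnEntropy, dif_pos Pin_herm]
  have : ∀ i, Pin_herm.eigenvalues i * Real.logb 2 (Pin_herm.eigenvalues i) = 0 := by
    intro i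
    rcases eigenvalues_of_idem Pin_herm Pin_idem i with h | h <;> simp [h]
  simp [this]

end Aux

/-- The output `|Φ₁^out⟩ = (I_a ⊗ U_{2×3} ⊗ I_b)|Φ₁^in⟩` has maximally
mixed reduced state `(1/4)·I₄` on `aA`; equivalently `E(Φ₁^out) = 2` while `E(Φ₁^in) = 0`. -/
theorem U23_creates_two_ebits :
    redDM (applyU U23 Phi1in) =
      (1/4 : ℂ) • (1 : Matrix (Fin 2 × Fin 2) (Fin 2 × Fin 2) ℂ) ∧
    entE (applyU U23 Phi1in) = 2 ∧ entE Phi1in = 0 := by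
  refine ⟨redDM_out, ?_, ?_⟩
  · rw [entE, redDM_out, vnEntropy_quarter]
  · rw [entE, redDM_in, vnEntropy_Pin]
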